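/- Fix τ > 0 and ζ > 0, and define for t ∈ [0,τ] the scalar functions F₀(t) = -2 ζ^{-1} (1-e^{-τζ})^{-2} (1-e^{-tζ})(1-e^{-(τ-t)ζ})(e^{-tζ} - (1+e^{-τζ})/2) and F₁(t) = 6 ζ^{-2} (1-e^{-τζ})^{-2} (1-e^{-tζ})(1-e^{-(τ-t)ζ}) e^{-tζ}. Then the divergence equation -d/dt (F₀(t) e^{-tζ}) + ζ² F₁(t) e^{-tζ} = e^{-tζ} holds for all t ∈ (0,τ). -/

import Mathlib

/-!
Write `x = e^{-tζ}` and `E = e^{-τζ}`. Since `e^{-tζ} e^{-(τ-t)ζ} = E`, the flux `F₀(t) e^{-tζ}` is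
`-2ζ⁻¹(1 - E)⁻² p(x)` for the cubic `p(X) = (1 - X)(X - E)(X - m)`, `m = (1 + E)/2`, and `ζ² F₁(t) e^{-tζ}` is
`6 (1 - E)⁻² x · q(x)` with `q(X) = (1 - X)(X - E)`. As `q' = -2(X - m)`, we get
`p' = q - 2(X - m)²`, and the equation reduces to `4 (q + (X - m)²) = 4 (m² - E) = (1 - E)²`.
-/

open Real Set

lemma exp_neg_mul_mul_exp_neg_sub_mul (τ ζ s : ℝ) :
    exp (-(s * ζ)) * exp (-((τ - s) * ζ)) = exp (-(τ * ζ)) := by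
  rw [← exp_add]
  congr 1
  ring

lemma hasDerivAt_exp_neg_mul (ζ s : ℝ) :
    HasDerivAt (fun u => exp (-(u * ζ))) (-ζ * exp (-(s * ζ))) s := by
  simpa [mul_comm] using ((hasDerivAt_mul_const ζ).neg (x := s)).exp

lemma HasDerivAt.one_sub_mul_sub_mul_sub {f : ℝ → ℝ} {f' s : ℝ} (hf : HasDerivAt f f' s)
    (a b : ℝ) :
    HasDerivAt (fun u => (1 - f u) * (f u - a) * (f u - b))
      (((1 - f s) * (f s - a) + (f s - b) * (1 + a - 2 * f s)) * f') s :=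
  (((hf.const_sub 1).fun_mul (hf.sub_const a)).fun_mul (hf.sub_const b)).congr_deriv (by ring)

theorem stmt_3 (τ ζ : ℝ) (hτ : 0 < τ) (hζ : 0 < ζ)
    (F₀ F₁ : ℝ → ℝ)
    (hF₀ : ∀ t, F₀ t = -2 * ζ⁻¹ * (1 - exp (-(τ*ζ)))⁻¹ ^ 2 *
      (1 - exp (-(t*ζ))) * (1 - exp (-((τ-t)*ζ))) * (exp (-(t*ζ)) - (1 + exp (-(τ*ζ))) / 2))
    (hF₁ : ∀ t, F₁ t = 6 * ζ⁻¹ ^ 2 * (1 - exp (-(τ*ζ)))⁻¹ ^ 2 *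
      (1 - exp (-(t*ζ))) * (1 - exp (-((τ-t)*ζ))) * exp (-(t*ζ))) :
    ∀ t ∈ Ioo 0 τ,
      -(deriv (fun s => F₀ s * exp (-(s*ζ))) t) + ζ^2 * F₁ t * exp (-(t*ζ)) = exp (-(t*ζ)) := by
  intro t _
  set E := exp (-(τ * ζ))
  have hE : 1 - E ≠ 0 := by
    have : E < 1 := exp_lt_one_iff.mpr (by nlinarith)
    linarith
  have hxy (s : ℝ) : exp (-(s * ζ)) * exp (-((τ - s) * ζ)) = E :=
    exp_neg_mul_mul_exp_neg_sub_mul τ ζ s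
  set c := -2 * ζ⁻¹ * (1 - E)⁻¹ ^ 2
  have hflux : (fun s => F₀ s * exp (-(s * ζ))) = fun s =>
      c * ((1 - exp (-(s * ζ))) * (exp (-(s * ζ)) - E) * (exp (-(s * ζ)) - (1 + E) / 2)) := by
    funext s
    rw [hF₀, ← hxy s]
    ring
  have hsource : ζ ^ 2 * F₁ t * exp (-(t * ζ)) =
      6 * (1 - E)⁻¹ ^ 2 * ((1 - exp (-(t * ζ))) * (exp (-(t * ζ)) - E)) * exp (-(t * ζ)) := by
    rw [hF₁, ← hxy t]
    field_simp
  have hderiv := ((hasDerivAt_exp_neg_mul ζ t).one_sub_mul_sub_mul_sub E ((1 + E) / 2)).const_mul c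
  rw [hflux, hderiv.deriv, hsource]
  simp only [c]
  field_simp
  ring
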